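/- arXiv:0905.2325 — 2 statements merged into one kernel-verified Lean document; each statement's English description precedes it below -/
import Mathlib

section
/- Let K be a field of characteristic ≠ 2, and let λ, μ, ν ∈ K satisfy λ = μ(1-ν)/(1-μ) (with μ ≠ 1). Suppose q ∈ K satisfies q² = μ(μ-ν) and q ≠ ±μ, q ≠ ±(1-μ). Then for any point (x,y) on the curve y² = x(x-1)(x-λ)(x-μ)(x-ν) with x ≠ μ - q, the pair (X,Y) = (((x-μ-q)/(x-μ+q))², w·y/(x-μ+q)³) with w = 8q/((μ-q)(-1+μ-q)) satisfies χ·Y² = (X-1)(X-x₂²)(X-x₃²) where x₂ = (μ+q)/(μ-q), x₃ = (1-μ-q)/(1-μ+q), χ = -q·μ(μ-1). -/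
/-!
Write `t = (x - μ - q) / (x - μ + q)`, so that `X = t²`. Each factor `X - c²` of the target
cubic, for `c = 1, x₂, x₃`, is a difference of two squares, and its two linear factors pick out
branch points of the quintic: using `q² = μ(μ - ν)` and `(1 - μ)λ = μ(1 - ν)`,
`X - 1 ∝ x - μ`, `X - x₂² ∝ x(x - ν)` and `X - x₃² ∝ (x - 1)(x - λ)`.
The product of the three is therefore a constant times `y² / (x - μ + q)⁶`, and `χ w²` is that
constant.
-/

theorem div_sq_sub_div_sq {K : Type*} [Field K] {a b c d : K} (hb : b ≠ 0) (hd : d ≠ 0) :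
    (a / b) ^ 2 - (c / d) ^ 2 = (a * d - c * b) * (a * d + c * b) / (b * d) ^ 2 := by
  field_simp
  ring

section Factors

variable {K : Type*} [Field K] {μ ν lam q x : K}

theorem moebius_sq_sub_one (hu : x - μ + q ≠ 0) :
    ((x - μ - q) / (x - μ + q)) ^ 2 - 1 = -4 * q * (x - μ) / (x - μ + q) ^ 2 := by
  rw [div_pow, div_sub_one (pow_ne_zero 2 hu)]
  ring

theorem moebius_sq_sub_sq_eq_x_mul_x_sub_ν (hq : q ^ 2 = μ * (μ - ν)) (hu : x - μ + q ≠ 0)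
    (h1 : μ - q ≠ 0) :
    ((x - μ - q) / (x - μ + q)) ^ 2 - ((μ + q) / (μ - q)) ^ 2 =
      -4 * q * μ * (x * (x - ν)) / ((x - μ + q) * (μ - q)) ^ 2 := by
  rw [div_sq_sub_div_sq hu h1]
  congr 1
  linear_combination (-4 * q * x) * hq

theorem moebius_sq_sub_sq_eq_x_sub_one_mul_x_sub_lam (hq : q ^ 2 = μ * (μ - ν))
    (hlam : (1 - μ) * lam = μ * (1 - ν)) (hu : x - μ + q ≠ 0) (h3 : 1 - μ + q ≠ 0) :
    ((x - μ - q) / (x - μ + q)) ^ 2 - ((1 - μ - q) / (1 - μ + q)) ^ 2 =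
      4 * q * (1 - μ) * ((x - 1) * (x - lam)) / ((x - μ + q) * (1 - μ + q)) ^ 2 := by
  rw [div_sq_sub_div_sq hu h3]
  congr 1
  linear_combination (4 * q * (x - 1)) * hlam - (4 * q * (x - 1)) * hq

end Factors

theorem stmt_5_general {K : Type*} [Field K]
    (μ ν lam q : K) (hμ1 : μ ≠ 1)
    (hlam : lam = μ * (1 - ν) / (1 - μ))
    (hq : q ^ 2 = μ * (μ - ν))
    (h1 : μ - q ≠ 0) (h3 : 1 - μ + q ≠ 0)
    (x₂ x₃ χ w : K)
    (hx₂ : x₂ = (μ + q) / (μ - q)) (hx₃ : x₃ = (1 - μ - q) / (1 - μ + q))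
    (hχ : χ = -q * μ * (μ - 1)) (hw : w = 8 * q / ((μ - q) * (-1 + μ - q))) :
    ∀ x y : K, y ^ 2 = x * (x - 1) * (x - lam) * (x - μ) * (x - ν) →
      x - μ + q ≠ 0 →
      χ * (w * y / (x - μ + q) ^ 3) ^ 2 =
        (((x - μ - q) / (x - μ + q)) ^ 2 - 1) *
        (((x - μ - q) / (x - μ + q)) ^ 2 - x₂ ^ 2) *
        (((x - μ - q) / (x - μ + q)) ^ 2 - x₃ ^ 2) := by
  intro x y hy hu
  have hlam' : (1 - μ) * lam = μ * (1 - ν) := by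
    rw [hlam, mul_div_cancel₀ _ (sub_ne_zero.2 hμ1.symm)]
  have h3' : -1 + μ - q ≠ 0 := fun h => h3 (by linear_combination -h)
  rw [hx₂, hx₃, moebius_sq_sub_one hu, moebius_sq_sub_sq_eq_x_mul_x_sub_ν hq hu h1,
    moebius_sq_sub_sq_eq_x_sub_one_mul_x_sub_lam hq hlam' hu h3, div_pow, mul_pow, hy, hχ, hw]
  field_simp
  ring

theorem stmt_5 {K : Type*} [Field K] (hchar : (2 : K) ≠ 0)
    (μ ν lam q : K) (hμ0 : μ ≠ 0) (hμ1 : μ ≠ 1)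
    (hlam : lam = μ * (1 - ν) / (1 - μ))
    (hq : q ^ 2 = μ * (μ - ν)) (hq0 : q ≠ 0)
    (h1 : μ - q ≠ 0) (h2 : μ + q ≠ 0) (h3 : 1 - μ + q ≠ 0) (h4 : 1 - μ - q ≠ 0)
    (x₂ x₃ χ w : K)
    (hx₂ : x₂ = (μ + q) / (μ - q)) (hx₃ : x₃ = (1 - μ - q) / (1 - μ + q))
    (hχ : χ = -q * μ * (μ - 1)) (hw : w = 8 * q / ((μ - q) * (-1 + μ - q))) :
    ∀ x y : K, y ^ 2 = x * (x - 1) * (x - lam) * (x - μ) * (x - ν) →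
      x - μ + q ≠ 0 →
      χ * (w * y / (x - μ + q) ^ 3) ^ 2 =
        (((x - μ - q) / (x - μ + q)) ^ 2 - 1) *
        (((x - μ - q) / (x - μ + q)) ^ 2 - x₂ ^ 2) *
        (((x - μ - q) / (x - μ + q)) ^ 2 - x₃ ^ 2) :=
  stmt_5_general μ ν lam q hμ1 hlam hq h1 h3 x₂ x₃ χ w hx₂ hx₃ hχ hw
end

section
/- Let K be a field of characteristic ≠ 2 and s, u, v ∈ K with s, u, v ≠ 0, s ≠ ±1, u ≠ ±1, s ≠ ±u, s² - 2u² + u⁴ ≠ 0, s ≠ ±u², and v² = 1 + (-3/s² + 1/s⁴)u² + u⁴/s². Define ν = (s²-u²)/(1-u²), μ = 1 - ν(1-ν)/s², λ = μ(1-ν)/(1-μ). Then the elements 0, 1, λ, μ, ν are pairwise distinct in K (so the polynomial x(x-1)(x-λ)(x-μ)(x-ν) is squarefree and the curve y² = x(x-1)(x-λ)(x-μ)(x-ν) has genus 2). -/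
/-!
With `D = 1 - u²` and `P = s⁴ - 3s²u² + u² + s²u⁴ = s⁴v²`, one has `νD = s² - u²`,
`(1 - ν)D = 1 - s²`, `μ s²D² = P` and `λν = μs²`. Every difference of two of the five points,
multiplied by a nonzero factor, then becomes a product of the quantities excluded by the
hypotheses: `1 - s²`, `s² - u²`, `u²`, `1 - u²`, `s² - 2u² + u⁴` and `P`.
-/

theorem sq_sub_sq_ne_zero {R : Type*} [CommRing R] [NoZeroDivisors R] {a b : R}
    (h : a ≠ b) (h' : a ≠ -b) : a ^ 2 - b ^ 2 ≠ 0 :=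
  sub_ne_zero.mpr fun hsq => (sq_eq_sq_iff_eq_or_eq_neg.mp hsq).elim h h'

theorem ne_of_sub_mul_eq {R : Type*} [Ring R] {a b c d : R} (h : (a - b) * c = d) (hd : d ≠ 0) :
    a ≠ b :=
  sub_ne_zero.mp (left_ne_zero_of_mul (h ▸ hd))

section Field

variable {K : Type*} [Field K] {s u v ν μ lam : K}

theorem curve_mul_pow_four (hs : s ≠ 0)
    (hcurve : v ^ 2 = 1 + (-3 / s ^ 2 + 1 / s ^ 4) * u ^ 2 + u ^ 4 / s ^ 2) :
    s ^ 4 * v ^ 2 = s ^ 4 - 3 * s ^ 2 * u ^ 2 + u ^ 2 + s ^ 2 * u ^ 4 := by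
  rw [hcurve]
  field_simp
  ring

theorem nu_mul (hD : 1 - u ^ 2 ≠ 0) (hν : ν = (s ^ 2 - u ^ 2) / (1 - u ^ 2)) :
    ν * (1 - u ^ 2) = s ^ 2 - u ^ 2 := by
  rw [hν, div_mul_cancel₀ _ hD]

theorem one_sub_mu_mul (hs : s ≠ 0) (hμ : μ = 1 - ν * (1 - ν) / s ^ 2) :
    (1 - μ) * s ^ 2 = ν * (1 - ν) := by
  rw [hμ, sub_sub_cancel, div_mul_cancel₀ _ (pow_ne_zero 2 hs)]

theorem lam_mul_nu (hμ1 : μ ≠ 1) (hν1 : ν ≠ 1) (hμs : (1 - μ) * s ^ 2 = ν * (1 - ν))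
    (hlam : lam = μ * (1 - ν) / (1 - μ)) : lam * ν = μ * s ^ 2 := by
  have hlμ : lam * (1 - μ) = μ * (1 - ν) := by
    rw [hlam, div_mul_cancel₀ _ (sub_ne_zero.mpr hμ1.symm)]
  apply mul_right_cancel₀ (sub_ne_zero.mpr hν1.symm)
  linear_combination s ^ 2 * hlμ - lam * hμs

end Field

section CommRing

variable {R : Type*} [CommRing R] {s u ν μ lam : R}

theorem one_sub_nu_mul (hνD : ν * (1 - u ^ 2) = s ^ 2 - u ^ 2) :
    (1 - ν) * (1 - u ^ 2) = 1 - s ^ 2 := by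
  linear_combination -hνD

theorem mu_mul (hμs : (1 - μ) * s ^ 2 = ν * (1 - ν))
    (hνD : ν * (1 - u ^ 2) = s ^ 2 - u ^ 2) :
    μ * (s ^ 2 * (1 - u ^ 2) ^ 2) = s ^ 4 - 3 * s ^ 2 * u ^ 2 + u ^ 2 + s ^ 2 * u ^ 4 := by
  linear_combination -(1 - u ^ 2) ^ 2 * hμs + (ν * (1 - u ^ 2) + s ^ 2 - 1) * hνD

theorem one_sub_lam_mul (hνD : ν * (1 - u ^ 2) = s ^ 2 - u ^ 2)
    (hμD : μ * (s ^ 2 * (1 - u ^ 2) ^ 2) = s ^ 4 - 3 * s ^ 2 * u ^ 2 + u ^ 2 + s ^ 2 * u ^ 4)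
    (hlν : lam * ν = μ * s ^ 2) :
    (1 - lam) * (ν * (1 - u ^ 2) ^ 2) = (1 - s ^ 2) * (s ^ 2 - 2 * u ^ 2 + u ^ 4) := by
  linear_combination -hμD - (1 - u ^ 2) ^ 2 * hlν + (1 - u ^ 2) * hνD

theorem lam_sub_mu_mul (hνD : ν * (1 - u ^ 2) = s ^ 2 - u ^ 2) (hlν : lam * ν = μ * s ^ 2) :
    (lam - μ) * (ν * (1 - u ^ 2)) = μ * (u ^ 2 * (1 - s ^ 2)) := by
  linear_combination (1 - u ^ 2) * hlν - μ * hνD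

theorem lam_sub_nu_mul (hνD : ν * (1 - u ^ 2) = s ^ 2 - u ^ 2)
    (hμD : μ * (s ^ 2 * (1 - u ^ 2) ^ 2) = s ^ 4 - 3 * s ^ 2 * u ^ 2 + u ^ 2 + s ^ 2 * u ^ 4)
    (hlν : lam * ν = μ * s ^ 2) :
    (lam - ν) * (ν * (1 - u ^ 2) ^ 2) = u ^ 2 * (1 - s ^ 2) * (1 - u ^ 2) := by
  linear_combination hμD + (1 - u ^ 2) ^ 2 * hlν - (ν * (1 - u ^ 2) + s ^ 2 - u ^ 2) * hνD

theorem mu_sub_nu_mul (hνD : ν * (1 - u ^ 2) = s ^ 2 - u ^ 2)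
    (hμD : μ * (s ^ 2 * (1 - u ^ 2) ^ 2) = s ^ 4 - 3 * s ^ 2 * u ^ 2 + u ^ 2 + s ^ 2 * u ^ 4) :
    (μ - ν) * (s ^ 2 * (1 - u ^ 2) ^ 2) = u ^ 2 * (1 - s ^ 2) ^ 2 := by
  linear_combination hμD - s ^ 2 * (1 - u ^ 2) * hνD

end CommRing

theorem stmt_6_general {K : Type*} [Field K]
    (s u v ν μ lam : K)
    (hs : s ≠ 0) (hs1 : s ≠ 1) (hs1' : s ≠ -1)
    (hu : u ≠ 0) (hu1 : u ≠ 1) (hu1' : u ≠ -1)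
    (hv : v ≠ 0)
    (hsu : s ≠ u) (hsu' : s ≠ -u)
    (hpoly : s ^ 2 - 2 * u ^ 2 + u ^ 4 ≠ 0)
    (hcurve : v ^ 2 = 1 + (-3 / s ^ 2 + 1 / s ^ 4) * u ^ 2 + u ^ 4 / s ^ 2)
    (hν : ν = (s ^ 2 - u ^ 2) / (1 - u ^ 2))
    (hμ : μ = 1 - ν * (1 - ν) / s ^ 2)
    (hlam : lam = μ * (1 - ν) / (1 - μ)) :
    lam ≠ 0 ∧ μ ≠ 0 ∧ ν ≠ 0 ∧ lam ≠ 1 ∧ μ ≠ 1 ∧ ν ≠ 1 ∧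
      lam ≠ μ ∧ lam ≠ ν ∧ μ ≠ ν := by
  have hD : 1 - u ^ 2 ≠ 0 := by
    simpa using sq_sub_sq_ne_zero hu1.symm fun h => hu1' (neg_eq_iff_eq_neg.mp h.symm)
  have hS : 1 - s ^ 2 ≠ 0 := by
    simpa using sq_sub_sq_ne_zero hs1.symm fun h => hs1' (neg_eq_iff_eq_neg.mp h.symm)
  have hN : s ^ 2 - u ^ 2 ≠ 0 := sq_sub_sq_ne_zero hsu hsu'
  have hP : s ^ 4 - 3 * s ^ 2 * u ^ 2 + u ^ 2 + s ^ 2 * u ^ 4 ≠ 0 :=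
    curve_mul_pow_four hs hcurve ▸ mul_ne_zero (pow_ne_zero 4 hs) (pow_ne_zero 2 hv)
  have hνD := nu_mul hD hν
  have hμs := one_sub_mu_mul hs hμ
  have hμD := mu_mul hμs hνD
  have hν0 : ν ≠ 0 := left_ne_zero_of_mul (hνD ▸ hN)
  have hν1 : ν ≠ 1 := (ne_of_sub_mul_eq (one_sub_nu_mul hνD) hS).symm
  have hμ0 : μ ≠ 0 := left_ne_zero_of_mul (hμD ▸ hP)
  have hμ1 : μ ≠ 1 := (ne_of_sub_mul_eq hμs (mul_ne_zero hν0 (sub_ne_zero.mpr hν1.symm))).symm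
  have hlν := lam_mul_nu hμ1 hν1 hμs hlam
  have hu2 : u ^ 2 ≠ 0 := pow_ne_zero 2 hu
  exact ⟨left_ne_zero_of_mul (hlν ▸ mul_ne_zero hμ0 (pow_ne_zero 2 hs)), hμ0, hν0,
    (ne_of_sub_mul_eq (one_sub_lam_mul hνD hμD hlν) (mul_ne_zero hS hpoly)).symm, hμ1, hν1,
    ne_of_sub_mul_eq (lam_sub_mu_mul hνD hlν) (mul_ne_zero hμ0 (mul_ne_zero hu2 hS)),
    ne_of_sub_mul_eq (lam_sub_nu_mul hνD hμD hlν) (mul_ne_zero (mul_ne_zero hu2 hS) hD),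
    ne_of_sub_mul_eq (mu_sub_nu_mul hνD hμD) (mul_ne_zero hu2 (pow_ne_zero 2 hS))⟩

theorem stmt_6 {K : Type*} [Field K] (hchar : (2 : K) ≠ 0)
    (s u v ν μ lam : K)
    (hs : s ≠ 0) (hs1 : s ≠ 1) (hs1' : s ≠ -1)
    (hu : u ≠ 0) (hu1 : u ≠ 1) (hu1' : u ≠ -1)
    (hv : v ≠ 0)
    (hsu : s ≠ u) (hsu' : s ≠ -u)
    (hsu2 : s ≠ u ^ 2) (hsu2' : s ≠ -u ^ 2)
    (hpoly : s ^ 2 - 2 * u ^ 2 + u ^ 4 ≠ 0)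
    (hcurve : v ^ 2 = 1 + (-3 / s ^ 2 + 1 / s ^ 4) * u ^ 2 + u ^ 4 / s ^ 2)
    (hν : ν = (s ^ 2 - u ^ 2) / (1 - u ^ 2))
    (hμ : μ = 1 - ν * (1 - ν) / s ^ 2)
    (hlam : lam = μ * (1 - ν) / (1 - μ)) :
    lam ≠ 0 ∧ μ ≠ 0 ∧ ν ≠ 0 ∧ lam ≠ 1 ∧ μ ≠ 1 ∧ ν ≠ 1 ∧
      lam ≠ μ ∧ lam ≠ ν ∧ μ ≠ ν :=
  stmt_6_general s u v ν μ lam hs hs1 hs1' hu hu1 hu1' hv hsu hsu' hpoly hcurve hν hμ hlam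
end
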